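/- arXiv:1801.09849 — 2 statements merged into one kernel-verified Lean document; each statement's English description precedes it below -/
import Mathlib

section
/- If a real $n \times n$ matrix $A$ is not $\mathcal{L}^n_+$-nonnegative (i.e. $A(\mathcal{L}^n_+) \not\subseteq \mathcal{L}^n_+$), then there exists an $\mathcal{L}^n_+$-semipositive matrix $B$ such that $A + B$ is not $\mathcal{L}^n_+$-semipositive. -/
open Matrix Set

/-- The Lorentz (ice-cream) cone in `ℝ^(n+1)`:
`{x : xₙ ≥ 0, xₙ² - ∑_{i<n} xᵢ² ≥ 0}`, the last coordinate playing the role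
of `xₙ`. -/
def lorentzCone (n : ℕ) : Set (Fin (n + 1) → ℝ) :=
  {x | 0 ≤ x (Fin.last n) ∧ ∑ i : Fin n, (x i.castSucc) ^ 2 ≤ (x (Fin.last n)) ^ 2}

/-- `A` is `ℒⁿ₊`-semipositive. -/
def Semipositive {n : ℕ} (A : Matrix (Fin (n + 1)) (Fin (n + 1)) ℝ) : Prop :=
  ∃ x ∈ interior (lorentzCone n), A.mulVec x ∈ interior (lorentzCone n)

/-
Since `A` is not `ℒⁿ₊`-nonnegative, some `x₀ ∈ ℒⁿ₊` has `A x₀ ∉ ℒⁿ₊`, and by self-duality of the cone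
there is `s ∈ ℒⁿ₊` with `s_n > 0` and `sᵀ A x₀ < 0`; pushing `x₀` slightly along the axis `eₙ`
gives an interior point `x₁` with `sᵀ A x₁ < 0`. The rank-one matrix `B = -s_n⁻¹ eₙ (sᵀ A)` maps `x₁`
to a positive multiple of `eₙ`, so it is semipositive, while `sᵀ (A + B) = 0`. But `sᵀ z > 0` for
every interior point `z` of the cone, so `A + B` cannot map any vector into the interior.
-/

section

variable {n : ℕ}

theorem exists_pos_add_smul_mem {E : Type*} [AddCommGroup E] [Module ℝ E] [TopologicalSpace E]
    [ContinuousAdd E] [ContinuousSMul ℝ E] {U : Set E} {x : E} (hU : U ∈ nhds x) (v : E) :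
    ∃ ε : ℝ, 0 < ε ∧ x + ε • v ∈ U := by
  have hline : Filter.Tendsto (fun ε : ℝ => x + ε • v) (nhds 0) (nhds x) := by
    have hcont : Continuous fun ε : ℝ => x + ε • v := by fun_prop
    simpa using hcont.tendsto 0
  obtain ⟨ε, hεU, hε⟩ :=
    ((hline.mono_left nhdsWithin_le_nhds).eventually hU |>.and
      (self_mem_nhdsWithin : Ioi (0 : ℝ) ∈ nhdsWithin 0 (Ioi 0))).exists
  exact ⟨ε, hε, hεU⟩

theorem dotProduct_nonneg_of_mem_lorentzCone {s y : Fin (n + 1) → ℝ}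
    (hs : s ∈ lorentzCone n) (hy : y ∈ lorentzCone n) : 0 ≤ s ⬝ᵥ y := by
  obtain ⟨hs0, hs1⟩ := hs
  obtain ⟨hy0, hy1⟩ := hy
  rw [dotProduct, Fin.sum_univ_castSucc]
  have cauchySchwarz := Finset.sum_mul_sq_le_sq_mul_sq Finset.univ
    (fun i : Fin n => s i.castSucc) (fun i : Fin n => y i.castSucc)
  have hs2 : 0 ≤ ∑ i : Fin n, s i.castSucc ^ 2 := Finset.sum_nonneg fun i _ => sq_nonneg _
  have hy2 : 0 ≤ ∑ i : Fin n, y i.castSucc ^ 2 := Finset.sum_nonneg fun i _ => sq_nonneg _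
  nlinarith [sq_nonneg (s (Fin.last n) * y (Fin.last n)
    + ∑ i : Fin n, s i.castSucc * y i.castSucc), mul_nonneg hs0 hy0]

theorem mem_interior_lorentzCone_of_lt {x : Fin (n + 1) → ℝ} (h0 : 0 < x (Fin.last n))
    (h1 : ∑ i : Fin n, x i.castSucc ^ 2 < x (Fin.last n) ^ 2) :
    x ∈ interior (lorentzCone n) := by
  have hopen : IsOpen {x : Fin (n + 1) → ℝ |
      0 < x (Fin.last n) ∧ ∑ i : Fin n, x i.castSucc ^ 2 < x (Fin.last n) ^ 2} :=
    (isOpen_lt continuous_const (continuous_apply _)).inter <| isOpen_lt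
      (by fun_prop : Continuous fun x : Fin (n + 1) → ℝ => ∑ i : Fin n, x i.castSucc ^ 2)
      (by fun_prop)
  refine interior_maximal ?_ hopen ⟨h0, h1⟩
  exact fun z hz => ⟨hz.1.le, hz.2.le⟩

theorem add_smul_single_last_mem_interior_lorentzCone {x : Fin (n + 1) → ℝ}
    (hx : x ∈ lorentzCone n) {ε : ℝ} (hε : 0 < ε) :
    x + ε • Pi.single (Fin.last n) 1 ∈ interior (lorentzCone n) := by
  obtain ⟨hx0, hx1⟩ := hx
  have hcast (i : Fin n) :
      (x + ε • Pi.single (Fin.last n) 1 : Fin (n + 1) → ℝ) i.castSucc = x i.castSucc := by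
    simp
  apply mem_interior_lorentzCone_of_lt
  · simpa using add_pos_of_nonneg_of_pos hx0 hε
  · simp only [hcast]
    simp only [Pi.add_apply, Pi.smul_apply, Pi.single_eq_same, smul_eq_mul, mul_one]
    nlinarith

theorem dotProduct_pos_of_mem_interior_lorentzCone {s z : Fin (n + 1) → ℝ}
    (hs : s ∈ lorentzCone n) (hsn : 0 < s (Fin.last n)) (hz : z ∈ interior (lorentzCone n)) :
    0 < s ⬝ᵥ z := by
  obtain ⟨δ, hδ, hmem⟩ :=
    exists_pos_add_smul_mem (mem_interior_iff_mem_nhds.mp hz) (-Pi.single (Fin.last n) 1)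
  have := dotProduct_nonneg_of_mem_lorentzCone hs hmem
  simp only [dotProduct_add, dotProduct_smul, dotProduct_neg, dotProduct_single_one,
    smul_eq_mul] at this
  nlinarith

theorem exists_dotProduct_neg_of_notMem_lorentzCone {v : Fin (n + 1) → ℝ}
    (hv : v ∉ lorentzCone n) :
    ∃ s ∈ lorentzCone n, 0 < s (Fin.last n) ∧ s ⬝ᵥ v < 0 := by
  simp only [lorentzCone, mem_ofPred_eq, not_and_or, not_le] at hv
  rcases hv with hlast | hcone
  · refine ⟨Pi.single (Fin.last n) 1, ⟨by simp, by simp⟩, by simp, ?_⟩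
    rwa [single_one_dotProduct]
  · set ρ := √(∑ i : Fin n, v i.castSucc ^ 2)
    have hρsq : ρ ^ 2 = ∑ i : Fin n, v i.castSucc ^ 2 :=
      Real.sq_sqrt (Finset.sum_nonneg fun i _ => sq_nonneg _)
    have hρ : 0 < ρ := Real.sqrt_pos.mpr ((sq_nonneg _).trans_lt hcone)
    have hvρ : v (Fin.last n) < ρ := by nlinarith [abs_nonneg (v (Fin.last n))]
    refine ⟨Fin.snoc (fun i => -v i.castSucc) ρ, ⟨by simpa using hρ.le, ?_⟩, by simpa using hρ, ?_⟩
    · simp [hρsq]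
    · simp only [dotProduct, Fin.sum_univ_castSucc, Fin.snoc_castSucc, Fin.snoc_last, neg_mul,
        Finset.sum_neg_distrib, ← sq, ← hρsq]
      nlinarith

theorem exists_mem_interior_lorentzCone_dotProduct_neg {w x : Fin (n + 1) → ℝ}
    (hx : x ∈ lorentzCone n) (hwx : w ⬝ᵥ x < 0) :
    ∃ y ∈ interior (lorentzCone n), w ⬝ᵥ y < 0 := by
  have hopen : IsOpen {y : Fin (n + 1) → ℝ | w ⬝ᵥ y < 0} :=
    isOpen_lt (by fun_prop) continuous_const
  obtain ⟨ε, hε, hneg⟩ := exists_pos_add_smul_mem (hopen.mem_nhds hwx) (Pi.single (Fin.last n) 1)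
  exact ⟨_, add_smul_single_last_mem_interior_lorentzCone hx hε, hneg⟩

theorem semipositive_vecMulVec_single_last {t x : Fin (n + 1) → ℝ}
    (hx : x ∈ interior (lorentzCone n)) (htx : 0 < t ⬝ᵥ x) :
    Semipositive (vecMulVec (Pi.single (Fin.last n) 1) t) := by
  refine ⟨x, hx, ?_⟩
  rw [vecMulVec_mulVec, op_smul_eq_smul, ← zero_add ((t ⬝ᵥ x) • _)]
  exact add_smul_single_last_mem_interior_lorentzCone ⟨le_rfl, by simp⟩ htx

theorem not_semipositive_of_vecMul_eq_zero {M : Matrix (Fin (n + 1)) (Fin (n + 1)) ℝ}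
    {s : Fin (n + 1) → ℝ} (hs : s ∈ lorentzCone n) (hsn : 0 < s (Fin.last n)) (hM : s ᵥ* M = 0) :
    ¬ Semipositive M := by
  rintro ⟨y, -, hMy⟩
  have := dotProduct_pos_of_mem_interior_lorentzCone hs hsn hMy
  rw [dotProduct_mulVec, hM, zero_dotProduct] at this
  exact this.false

end

theorem stmt_8 {n : ℕ} (A : Matrix (Fin (n + 1)) (Fin (n + 1)) ℝ)
    (hA : ¬ (∀ x ∈ lorentzCone n, A.mulVec x ∈ lorentzCone n)) :
    ∃ B : Matrix (Fin (n + 1)) (Fin (n + 1)) ℝ,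
      Semipositive B ∧ ¬ Semipositive (A + B) := by
  obtain ⟨x₀, hx₀, hAx₀⟩ := not_forall₂.mp hA
  obtain ⟨s, hs, hsn, hsAx₀⟩ := exists_dotProduct_neg_of_notMem_lorentzCone hAx₀
  rw [dotProduct_mulVec] at hsAx₀
  obtain ⟨x₁, hx₁, hsAx₁⟩ := exists_mem_interior_lorentzCone_dotProduct_neg hx₀ hsAx₀
  set t := -(s (Fin.last n))⁻¹ • (s ᵥ* A)
  refine ⟨vecMulVec (Pi.single (Fin.last n) 1) t, ?_, ?_⟩
  · refine semipositive_vecMulVec_single_last hx₁ ?_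
    rw [smul_dotProduct, smul_eq_mul]
    exact mul_pos_of_neg_of_neg (by simpa using hsn) hsAx₁
  · refine not_semipositive_of_vecMul_eq_zero hs hsn ?_
    rw [vecMul_add, vecMul_vecMulVec, dotProduct_single_one, smul_smul, mul_neg,
      mul_inv_cancel₀ hsn.ne', neg_smul, one_smul, add_neg_cancel]
end

section
/- Let $K \subseteq \mathbb{R}^n$ be an ellipsoidal cone, so that $K = T(\mathcal{L}^n_+)$ for an invertible real $n \times n$ matrix $T$. Then, for a real $n \times n$ matrix $A$, the matrix $T A T^{-1}$ is $K$-nonnegative (i.e. $TAT^{-1}(K) \subseteq K$) if and only if for every $\mathcal{L}^n_+$-semipositive matrix $B$, the matrix $A + B$ is $\mathcal{L}^n_+$-semipositive. -/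
open Matrix Set

/-!
Conjugating by `T` reduces the claim to `K = ℒⁿ₊`, and there the equivalence holds for every
proper cone `C` with nonempty interior. If `A(C) ⊆ C`, then `C + int C ⊆ int C` gives the forward
direction. Conversely, if `A u ∉ C` for some `u ∈ C`, perturb `u` to an interior point `x` with
`A x ∉ C` and separate `A x` from `C` by a functional `f ≥ 0` on `C`; such an `f ≠ 0` is positive
on `int C`. The rank-one map `B v = -(f (A v) / f x) • x` is semipositive, since `B x` is a positive
multiple of `x`, but `f` vanishes on the range of `A + B`, so `A + B` maps no point into `int C`.
-/

open Filter Topology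
open scoped Pointwise

namespace ProperCone

variable {E : Type*} [AddCommGroup E] [Module ℝ E] [TopologicalSpace E] (C : ProperCone ℝ E)

def IsSemipositive (B : E →L[ℝ] E) : Prop :=
  ∃ x ∈ interior (C : Set E), B x ∈ interior (C : Set E)

variable {C}

lemma add_mem_interior [ContinuousAdd E] {x y : E} (hx : x ∈ C)
    (hy : y ∈ interior (C : Set E)) : x + y ∈ interior (C : Set E) := by
  refine interior_maximal ?_ (isOpen_interior.vadd x) (vadd_mem_vadd_set hy)
  rintro _ ⟨z, hz, rfl⟩
  exact C.add_mem hx (interior_subset hz)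

lemma smul_mem_interior [ContinuousConstSMul ℝ E] {c : ℝ} (hc : 0 < c) {x : E}
    (hx : x ∈ interior (C : Set E)) : c • x ∈ interior (C : Set E) := by
  have hsub : c • (C : Set E) ⊆ C := by
    rintro _ ⟨z, hz, rfl⟩
    exact C.smul_mem hz hc.le
  exact interior_mono hsub ((interior_smul₀ hc.ne' (C : Set E)).symm ▸ smul_mem_smul_set hx)

lemma pos_of_mem_interior [ContinuousAdd E] [ContinuousSMul ℝ E] {f : StrongDual ℝ E}
    (hf : ∀ x ∈ C, 0 ≤ f x) (hf0 : f ≠ 0) {z : E} (hz : z ∈ interior (C : Set E)) :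
    0 < f z := by
  refine (hf z (interior_subset hz)).lt_of_ne fun hfz => hf0 ?_
  ext w
  have hline : Tendsto (fun t : ℝ => z + t • w) (𝓝 0) (𝓝 z) :=
    (by fun_prop : Continuous fun t : ℝ => z + t • w).tendsto' 0 z (by simp)
  obtain ⟨ε, hε, hball⟩ := Metric.eventually_nhds_iff.1
    (hline.eventually (mem_interior_iff_mem_nhds.1 hz))
  have hsign : ∀ t : ℝ, |t| < ε → 0 ≤ t * f w := fun t ht => by
    simpa [← hfz] using hf _ (hball (by simpa using ht))
  have hpos := hsign (ε / 2) (by rw [abs_of_pos (by positivity)]; linarith)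
  have hneg := hsign (-(ε / 2)) (by rw [abs_neg, abs_of_pos (by positivity)]; linarith)
  change f w = 0
  nlinarith

lemma exists_mem_interior_apply_notMem [ContinuousAdd E] [ContinuousSMul ℝ E]
    (hC : (interior (C : Set E)).Nonempty) {A : E →L[ℝ] E} {u : E} (hu : u ∈ C)
    (hAu : A u ∉ C) : ∃ x ∈ interior (C : Set E), A x ∉ C := by
  obtain ⟨e, he⟩ := hC
  have hline : Tendsto (fun t : ℝ => A (u + t • e)) (𝓝[>] 0) (𝓝 (A u)) :=
    ((by fun_prop : Continuous fun t : ℝ => A (u + t • e)).tendsto' 0 (A u) (by simp)).mono_left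
      nhdsWithin_le_nhds
  obtain ⟨t, htC, ht⟩ :=
    ((hline.eventually (C.isClosed.isOpen_compl.mem_nhds hAu)).and self_mem_nhdsWithin).exists
  exact ⟨u + t • e, add_mem_interior hu (smul_mem_interior ht he), htC⟩

lemma isSemipositive_add_of_mapsTo [ContinuousAdd E] {A B : E →L[ℝ] E} (hA : MapsTo A C C)
    (hB : C.IsSemipositive B) : C.IsSemipositive (A + B) := by
  obtain ⟨x, hx, hBx⟩ := hB
  exact ⟨x, hx, add_mem_interior (hA (interior_subset hx)) hBx⟩

lemma mapsTo_of_forall_isSemipositive_add [IsTopologicalAddGroup E] [ContinuousSMul ℝ E]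
    [LocallyConvexSpace ℝ E] (hC : (interior (C : Set E)).Nonempty) {A : E →L[ℝ] E}
    (h : ∀ B, C.IsSemipositive B → C.IsSemipositive (A + B)) : MapsTo A C C := by
  intro u hu
  by_contra hAu
  obtain ⟨x, hx, hAx⟩ := exists_mem_interior_apply_notMem hC hu hAu
  obtain ⟨f, hfC, hfAx⟩ := C.hyperplane_separation_point hAx
  have hf0 : f ≠ 0 := by rintro rfl; simp at hfAx
  have hfx : 0 < f x := pos_of_mem_interior hfC hf0 hx
  let B : E →L[ℝ] E := -(f x)⁻¹ • (f ∘L A).smulRight x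
  have hB : ∀ v, B v = -(f (A v) / f x) • x := fun v => by
    simp [B, smul_smul, div_eq_inv_mul]
  have hBx : B x ∈ interior (C : Set E) := by
    rw [hB]
    exact smul_mem_interior (neg_pos.2 (div_neg_of_neg_of_pos hfAx hfx)) hx
  obtain ⟨v, -, hv⟩ := h B ⟨x, hx, hBx⟩
  have hfv : f ((A + B) v) = 0 := by
    simp [hB, hfx.ne']
  exact (pos_of_mem_interior hfC hf0 hv).ne' hfv

theorem mapsTo_iff_forall_isSemipositive_add [IsTopologicalAddGroup E] [ContinuousSMul ℝ E]
    [LocallyConvexSpace ℝ E] (hC : (interior (C : Set E)).Nonempty) (A : E →L[ℝ] E) :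
    MapsTo A C C ↔ ∀ B, C.IsSemipositive B → C.IsSemipositive (A + B) :=
  ⟨fun hA _ => isSemipositive_add_of_mapsTo hA, mapsTo_of_forall_isSemipositive_add hC⟩

end ProperCone

lemma Matrix.mapsTo_mulVec_conj_image_iff {m R : Type*} [Fintype m] [DecidableEq m] [CommRing R]
    {T : Matrix m m R} (hT : IsUnit T.det) (A : Matrix m m R) (S : Set (m → R)) :
    MapsTo (T * A * T⁻¹).mulVec (T.mulVec '' S) (T.mulVec '' S) ↔ MapsTo A.mulVec S S := by
  have hinj : Function.Injective T.mulVec :=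
    mulVec_injective_of_isUnit ((isUnit_iff_isUnit_det T).2 hT)
  have hconj : (T * A * T⁻¹).mulVec ∘ T.mulVec = T.mulVec ∘ A.mulVec := by
    funext u
    simp [mulVec_mulVec, Matrix.mul_assoc, nonsing_inv_mul _ hT]
  rw [mapsTo_image_iff, hconj]
  simp only [MapsTo, Function.comp_apply, hinj.mem_set_image]

namespace lorentzCone

variable {n : ℕ}

noncomputable def spatialPart (n : ℕ) : (Fin (n + 1) → ℝ) →L[ℝ] EuclideanSpace ℝ (Fin n) :=
  (EuclideanSpace.equiv (Fin n) ℝ).symm.toContinuousLinearMap ∘L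
    ContinuousLinearMap.pi fun i => ContinuousLinearMap.proj i.castSucc

lemma mem_iff_norm_spatialPart_le {x : Fin (n + 1) → ℝ} :
    x ∈ lorentzCone n ↔ ‖spatialPart n x‖ ≤ x (Fin.last n) := by
  simp [spatialPart, EuclideanSpace.norm_eq, Real.sqrt_le_iff, lorentzCone]

lemma isClosed : IsClosed (lorentzCone n) := by
  have : lorentzCone n = {x | ‖spatialPart n x‖ ≤ x (Fin.last n)} :=
    Set.ext fun _ => mem_iff_norm_spatialPart_le
  rw [this]
  exact isClosed_le (spatialPart n).continuous.norm (continuous_apply _)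

lemma add_mem {x y : Fin (n + 1) → ℝ} (hx : x ∈ lorentzCone n) (hy : y ∈ lorentzCone n) :
    x + y ∈ lorentzCone n := by
  rw [mem_iff_norm_spatialPart_le] at *
  calc ‖spatialPart n (x + y)‖ ≤ ‖spatialPart n x‖ + ‖spatialPart n y‖ := by
        rw [map_add]; exact norm_add_le _ _
    _ ≤ (x + y) (Fin.last n) := add_le_add hx hy

lemma smul_mem {c : ℝ} (hc : 0 ≤ c) {x : Fin (n + 1) → ℝ} (hx : x ∈ lorentzCone n) :
    c • x ∈ lorentzCone n := by
  rw [mem_iff_norm_spatialPart_le] at *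
  rw [map_smul, norm_smul, Real.norm_of_nonneg hc, Pi.smul_apply, smul_eq_mul]
  exact mul_le_mul_of_nonneg_left hx hc

lemma single_last_mem_interior : Pi.single (Fin.last n) 1 ∈ interior (lorentzCone n) := by
  have hopen : IsOpen {x : Fin (n + 1) → ℝ | ‖spatialPart n x‖ < x (Fin.last n)} :=
    isOpen_lt (spatialPart n).continuous.norm (continuous_apply _)
  refine interior_maximal (fun x hx => mem_iff_norm_spatialPart_le.2 (le_of_lt hx)) hopen ?_
  have : spatialPart n (Pi.single (Fin.last n) 1) = 0 := by
    ext i; simp [spatialPart, Fin.castSucc_ne_last]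
  show ‖_‖ < _
  simp [this]

end lorentzCone

noncomputable def lorentzProperCone (n : ℕ) : ProperCone ℝ (Fin (n + 1) → ℝ) where
  carrier := lorentzCone n
  add_mem' := lorentzCone.add_mem
  zero_mem' := by simp [lorentzCone]
  smul_mem' c _ hx := lorentzCone.smul_mem c.2 hx
  isClosed' := lorentzCone.isClosed

lemma lorentzProperCone_interior_nonempty {n : ℕ} :
    (interior (lorentzProperCone n : Set (Fin (n + 1) → ℝ))).Nonempty :=
  ⟨_, lorentzCone.single_last_mem_interior⟩

theorem mapsTo_lorentzCone_iff_forall_semipositive_add {n : ℕ}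
    (A : Matrix (Fin (n + 1)) (Fin (n + 1)) ℝ) :
    MapsTo A.mulVec (lorentzCone n) (lorentzCone n) ↔
      ∀ B : Matrix (Fin (n + 1)) (Fin (n + 1)) ℝ, Semipositive B → Semipositive (A + B) := by
  let φ : Matrix (Fin (n + 1)) (Fin (n + 1)) ℝ ≃ₗ[ℝ] ((Fin (n + 1) → ℝ) →L[ℝ] Fin (n + 1) → ℝ) :=
    Matrix.toLin'.trans LinearMap.toContinuousLinearMap
  have hsemi : ∀ B, Semipositive B ↔ (lorentzProperCone n).IsSemipositive (φ B) :=
    fun _ => Iff.rfl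
  have hmaps : MapsTo A.mulVec (lorentzCone n) (lorentzCone n) ↔
      MapsTo (φ A) (lorentzProperCone n) (lorentzProperCone n) := Iff.rfl
  rw [hmaps, (lorentzProperCone n).mapsTo_iff_forall_isSemipositive_add
    lorentzProperCone_interior_nonempty]
  simp only [hsemi, map_add]
  exact φ.toEquiv.forall_congr_right.symm

theorem stmt_10 {n : ℕ} (K : Set (Fin (n + 1) → ℝ))
    (T : Matrix (Fin (n + 1)) (Fin (n + 1)) ℝ) (hT : IsUnit T.det)
    (hK : K = T.mulVec '' lorentzCone n)
    (A : Matrix (Fin (n + 1)) (Fin (n + 1)) ℝ) :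
    (∀ x ∈ K, (T * A * T⁻¹).mulVec x ∈ K) ↔
      (∀ B : Matrix (Fin (n + 1)) (Fin (n + 1)) ℝ,
        Semipositive B → Semipositive (A + B)) := by
  subst hK
  exact (Matrix.mapsTo_mulVec_conj_image_iff hT A _).trans
    (mapsTo_lorentzCone_iff_forall_semipositive_add A)
end
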